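/- Let n ≥ 1 and let f : {0,1}^n → ℝ be a nonzero nonnegative function. Then D²(f) ≥ 4 · K²(f) · φ(Ent(f²)/K²(f)), where D²(f) = E_x Σ_{y∼x} (f(x) − f(y))², K²(f) = (1/4) · E_x Σ_{y∼x} (f(x) + f(y))², and φ : [0, 2 log 2] → [0,1] is the inverse of ψ. (Note K²(f) > 0 and Ent(f²) ≤ 2 log 2 · K²(f), so the right-hand side is well-defined.) -/

import Mathlib

/-- Expectation of `g` over the uniform measure on the Hamming cube `{0,1}^n`. -/
noncomputable def cubeE (n : ℕ) (g : (Fin n → Bool) → ℝ) : ℝ :=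
  (∑ x : Fin n → Bool, g x) / 2 ^ n

/-- `E_x ∑_{y ∼ x} (f x - f y)^2` on the Hamming cube `{0,1}^n`. -/
noncomputable def cubeD2 (n : ℕ) (f : (Fin n → Bool) → ℝ) : ℝ :=
  cubeE n (fun x => ∑ i : Fin n, (f x - f (Function.update x i (!x i))) ^ 2)

/-- `Ent(f²) = E[f² log f²] - E[f²] log E[f²]` (note `Real.log 0 = 0`). -/
noncomputable def cubeEnt (n : ℕ) (f : (Fin n → Bool) → ℝ) : ℝ :=
  cubeE n (fun x => f x ^ 2 * Real.log (f x ^ 2)) -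
    cubeE n (fun x => f x ^ 2) * Real.log (cubeE n (fun x => f x ^ 2))

/-- `K²(f) = (1/4)·E_x ∑_{y∼x} (f x + f y)²` on the Hamming cube `{0,1}^n`. -/
noncomputable def cubeK2 (n : ℕ) (f : (Fin n → Bool) → ℝ) : ℝ :=
  (1 / 4) * cubeE n (fun x => ∑ i : Fin n, (f x + f (Function.update x i (!x i))) ^ 2)

/-- `ψ(t) = (1/2)(1−√t)² log((1−√t)²) + (1/2)(1+√t)² log((1+√t)²) − (1+t) log(1+t)`
(note `Real.log 0 = 0`). -/
noncomputable def psi (t : ℝ) : ℝ :=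
  (1 / 2) * (1 - Real.sqrt t) ^ 2 * Real.log ((1 - Real.sqrt t) ^ 2) +
    (1 / 2) * (1 + Real.sqrt t) ^ 2 * Real.log ((1 + Real.sqrt t) ^ 2) -
    (1 + t) * Real.log (1 + t)

/-!
The entropy of `g = f²` tensorizes over the cube: `Ent(g)` is at most the average over directed
edges `x ∼ y` of the two-point entropies of `(g x, g y)`. This is proved by induction on `n`,
splitting off the first coordinate (chain rule) and using the joint convexity of the two-point
entropy, a consequence of the convexity of `x log x` through its perspective.

For `u, v ≥ 0` the two-point entropy of `(u², v²)` equals `k ψ(d / k)` with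
`k = ((u + v) / 2)²` and `d = ((u - v) / 2)²`. Since `ψ` is concave on `[0, 1]`, Jensen's
inequality for its perspective bounds the edge average by `K²(f) ψ(D²(f) / (4 K²(f)))`, i.e.
`Ent(f²) / K² ≤ ψ(D² / (4 K²))`, and as `ψ` is strictly increasing this inverts to the claim.
Concavity of `ψ` comes from `ψ'(t) = oddMulLog √t / √t - log (1 + t)`: `oddMulLog` is concave
and vanishes at `0`, so its secant slope `oddMulLog s / s` decreases.
-/

open Real Set

-- `Ent` on the two-point space `{0,1}` for the function with values `a`, `b`.
noncomputable def twoPointEnt (a b : ℝ) : ℝ :=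
  (a * log a + b * log b) / 2 - (a + b) / 2 * log ((a + b) / 2)

lemma twoPointEnt_comm (a b : ℝ) : twoPointEnt a b = twoPointEnt b a := by
  rw [twoPointEnt, twoPointEnt, add_comm a b, add_comm (a * log a)]

lemma twoPointEnt_mul_mul (c a b : ℝ) : twoPointEnt (c * a) (c * b) = c * twoPointEnt a b := by
  have h (x : ℝ) := negMulLog_mul c x
  simp only [negMulLog] at h
  rw [twoPointEnt, twoPointEnt, show (c * a + c * b) / 2 = c * ((a + b) / 2) by ring]
  linear_combination (-(h a) - h b) / 2 + h ((a + b) / 2)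

lemma mul_log_div_of_ne_zero (a : ℝ) {s : ℝ} (hs : s ≠ 0) :
    a * log (a / s) = a * log a - a * log s := by
  rcases eq_or_ne a 0 with rfl | ha
  · simp
  · rw [log_div ha hs]; ring

lemma two_mul_twoPointEnt {a b : ℝ} (h : a + b ≠ 0) :
    2 * twoPointEnt a b = a * log (a / ((a + b) / 2)) + b * log (b / ((a + b) / 2)) := by
  have hm : (a + b) / 2 ≠ 0 := div_ne_zero h two_ne_zero
  rw [mul_log_div_of_ne_zero a hm, mul_log_div_of_ne_zero b hm, twoPointEnt]
  ring

lemma add_mul_log_div_add_le {a c s t : ℝ} (ha : 0 ≤ a) (hc : 0 ≤ c) (hs : 0 < s) (ht : 0 < t) :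
    (a + c) * log ((a + c) / (s + t)) ≤ a * log (a / s) + c * log (c / t) := by
  have hst : 0 < s + t := add_pos hs ht
  have key := convexOn_mul_log.2 (mem_Ici.2 (div_nonneg ha hs.le))
    (mem_Ici.2 (div_nonneg hc ht.le)) (div_pos hs hst).le (div_pos ht hst).le
    (by field_simp)
  have hcomb : s / (s + t) * (a / s) + t / (s + t) * (c / t) = (a + c) / (s + t) := by
    field_simp
  simp only [smul_eq_mul, hcomb] at key
  calc (a + c) * log ((a + c) / (s + t))
      = (s + t) * ((a + c) / (s + t) * log ((a + c) / (s + t))) := by field_simp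
    _ ≤ (s + t) * (s / (s + t) * (a / s * log (a / s)) + t / (s + t) * (c / t * log (c / t))) :=
        mul_le_mul_of_nonneg_left key hst.le
    _ = a * log (a / s) + c * log (c / t) := by field_simp

lemma twoPointEnt_add_le {a b c d : ℝ} (ha : 0 ≤ a) (hb : 0 ≤ b) (hc : 0 ≤ c) (hd : 0 ≤ d) :
    twoPointEnt (a + c) (b + d) ≤ twoPointEnt a b + twoPointEnt c d := by
  rcases (add_nonneg ha hb).eq_or_lt with hab | hab
  · obtain ⟨rfl, rfl⟩ : a = 0 ∧ b = 0 := ⟨by linarith, by linarith⟩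
    simp [twoPointEnt]
  rcases (add_nonneg hc hd).eq_or_lt with hcd | hcd
  · obtain ⟨rfl, rfl⟩ : c = 0 ∧ d = 0 := ⟨by linarith, by linarith⟩
    simp [twoPointEnt]
  have e := two_mul_twoPointEnt (a := a + c) (b := b + d) (by linarith)
  rw [show (a + c + (b + d)) / 2 = (a + b) / 2 + (c + d) / 2 by ring] at e
  linarith [two_mul_twoPointEnt hab.ne', two_mul_twoPointEnt hcd.ne',
    add_mul_log_div_add_le ha hc (half_pos hab) (half_pos hcd),
    add_mul_log_div_add_le hb hd (half_pos hab) (half_pos hcd)]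

lemma psi_eq_twoPointEnt {t : ℝ} (ht : 0 ≤ t) :
    psi t = twoPointEnt ((1 - √t) ^ 2) ((1 + √t) ^ 2) := by
  have hm : ((1 - √t) ^ 2 + (1 + √t) ^ 2) / 2 = 1 + t := by
    linear_combination sq_sqrt ht
  rw [twoPointEnt, hm, psi]
  ring

lemma psi_sq (s : ℝ) : psi (s ^ 2) = twoPointEnt ((1 - s) ^ 2) ((1 + s) ^ 2) := by
  rw [psi_eq_twoPointEnt (sq_nonneg s), sqrt_sq_eq_abs]
  rcases abs_choice s with h | h <;> rw [h]
  rw [twoPointEnt_comm]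
  ring_nf

lemma twoPointEnt_sq_sq (u v : ℝ) :
    twoPointEnt (u ^ 2) (v ^ 2) =
      ((u + v) / 2) ^ 2 * psi (((u - v) / 2) ^ 2 / ((u + v) / 2) ^ 2) := by
  rcases eq_or_ne (u + v) 0 with h | h
  · obtain rfl : v = -u := by linarith
    simp [twoPointEnt]
  rw [← div_pow, psi_sq, ← twoPointEnt_mul_mul, twoPointEnt_comm]
  congr 1 <;> field_simp <;> ring

lemma twoPointEnt_midpoint_le {a b c d : ℝ} (ha : 0 ≤ a) (hb : 0 ≤ b) (hc : 0 ≤ c) (hd : 0 ≤ d) :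
    twoPointEnt ((a + c) / 2) ((b + d) / 2) ≤ (twoPointEnt a b + twoPointEnt c d) / 2 := by
  rw [div_eq_inv_mul, div_eq_inv_mul (b + d), twoPointEnt_mul_mul]
  linarith [twoPointEnt_add_le ha hb hc hd]

noncomputable def oddMulLog (s : ℝ) : ℝ := (1 + s) * log (1 + s) - (1 - s) * log (1 - s)

lemma continuous_oddMulLog : Continuous oddMulLog :=
  (continuous_const.add continuous_id).mul_log.sub (continuous_const.sub continuous_id).mul_log

lemma hasDerivAt_oddMulLog {s : ℝ} (h₁ : 1 + s ≠ 0) (h₂ : 1 - s ≠ 0) :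
    HasDerivAt oddMulLog (log (1 + s) + log (1 - s) + 2) s := by
  have hp := (hasDerivAt_mul_log h₁).comp s ((hasDerivAt_id s).const_add 1)
  have hm := (hasDerivAt_mul_log h₂).comp s ((hasDerivAt_id s).const_sub 1)
  exact (hp.sub hm).congr_deriv (by ring)

lemma concaveOn_oddMulLog : ConcaveOn ℝ (Icc 0 1) oddMulLog := by
  have hderiv {s : ℝ} (hs : s ∈ Ioo (0 : ℝ) 1) :=
    hasDerivAt_oddMulLog (s := s) (by linarith [hs.1]) (by linarith [hs.2])
  refine AntitoneOn.concaveOn_of_deriv (convex_Icc 0 1) continuous_oddMulLog.continuousOn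
    ?_ ?_ <;> rw [interior_Icc]
  · exact fun s hs => (hderiv hs).differentiableAt.differentiableWithinAt
  intro a ha b hb hab
  rw [(hderiv ha).deriv, (hderiv hb).deriv,
    ← log_mul (x := 1 + a) (by linarith [ha.1]) (by linarith [ha.2]),
    ← log_mul (x := 1 + b) (by linarith [hb.1]) (by linarith [hb.2])]
  gcongr ?_ + 2
  exact log_le_log (by nlinarith [hb.2, hb.1]) (by nlinarith [ha.1])

lemma oddMulLog_div_antitoneOn : AntitoneOn (fun s => oddMulLog s / s) (Ioc 0 1) := by
  intro a ha b hb hab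
  have h := concaveOn_oddMulLog.neg.secant_mono (a := 0) ⟨le_rfl, zero_le_one⟩
    (Ioc_subset_Icc_self ha) (Ioc_subset_Icc_self hb) ha.1.ne' hb.1.ne' hab
  have h0 : oddMulLog 0 = 0 := by simp [oddMulLog]
  simp only [Pi.neg_apply, h0, neg_zero, sub_zero, neg_div] at h
  linarith

lemma psi_eq_mul_log : psi = fun t => 1 / 2 * ((1 - √t) ^ 2 * log ((1 - √t) ^ 2)) +
    1 / 2 * ((1 + √t) ^ 2 * log ((1 + √t) ^ 2)) - (1 + t) * log (1 + t) := by
  funext t; rw [psi]; ring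

lemma hasDerivAt_psi {t : ℝ} (h0 : 0 < t) (h1 : t < 1) :
    HasDerivAt psi (oddMulLog √t / √t - log (1 + t)) t := by
  set s := √t with hs
  have hs0 : 0 < s := sqrt_pos.2 h0
  have hs1 : s < 1 := (sqrt_lt' one_pos).2 (by rwa [one_pow])
  have hts : t = s ^ 2 := (sq_sqrt h0.le).symm
  have hsq : HasDerivAt Real.sqrt (1 / (2 * s)) t := by
    simpa [one_div] using hasDerivAt_sqrt h0.ne'
  have hu1 := ((hasDerivAt_const t (1:ℝ)).sub hsq).pow 2
  have hu2 := ((hasDerivAt_const t (1:ℝ)).add hsq).pow 2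
  have hc1 := (hasDerivAt_mul_log (pow_ne_zero 2 (sub_ne_zero.2 hs1.ne'))).comp t hu1
  have hc2 := (hasDerivAt_mul_log (by positivity : (1 + s) ^ 2 ≠ 0)).comp t hu2
  have hc3 := (hasDerivAt_mul_log (by positivity : 1 + t ≠ 0)).comp t
    ((hasDerivAt_id t).const_add 1)
  rw [psi_eq_mul_log]
  refine (((hc1.const_mul (1 / 2)).add (hc2.const_mul (1 / 2))).sub hc3).congr_deriv ?_
  simp only [oddMulLog, log_pow, Pi.sub_apply, Pi.add_apply, ← hs]
  push_cast
  rw [hts]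
  field_simp
  ring

lemma continuous_psi : Continuous psi := by
  rw [psi_eq_mul_log]
  exact ((continuous_const.mul ((continuous_const.sub continuous_sqrt).pow 2).mul_log).add
    (continuous_const.mul ((continuous_const.add continuous_sqrt).pow 2).mul_log)).sub
    (continuous_const.add continuous_id).mul_log

lemma concaveOn_psi : ConcaveOn ℝ (Icc 0 1) psi := by
  refine AntitoneOn.concaveOn_of_deriv (convex_Icc 0 1) continuous_psi.continuousOn ?_ ?_ <;>
    rw [interior_Icc]
  · exact fun t ht => (hasDerivAt_psi ht.1 ht.2).differentiableAt.differentiableWithinAt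
  intro a ha b hb hab
  have hsqrt {t : ℝ} (ht : t ∈ Ioo (0 : ℝ) 1) : √t ∈ Ioc (0 : ℝ) 1 :=
    ⟨sqrt_pos.2 ht.1, sqrt_le_one.2 ht.2.le⟩
  rw [(hasDerivAt_psi ha.1 ha.2).deriv, (hasDerivAt_psi hb.1 hb.2).deriv]
  exact sub_le_sub (oddMulLog_div_antitoneOn (hsqrt ha) (hsqrt hb) (sqrt_le_sqrt hab))
    (log_le_log (by linarith [ha.1]) (by linarith))

lemma strictMonoOn_psi : StrictMonoOn psi (Icc 0 1) := by
  refine strictMonoOn_of_deriv_pos (convex_Icc 0 1) continuous_psi.continuousOn fun t ht => ?_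
  rw [interior_Icc] at ht
  rw [(hasDerivAt_psi ht.1 ht.2).deriv, sub_pos, lt_div_iff₀ (sqrt_pos.2 ht.1)]
  have hs0 : 0 < √t := sqrt_pos.2 ht.1
  have hs1 : √t < 1 := (sqrt_lt' one_pos).2 (by rw [one_pow]; exact ht.2)
  have hlog : log (1 + t) ≤ log (1 + √t) :=
    log_le_log (by linarith [ht.1]) (by nlinarith [sq_sqrt ht.1.le])
  have hpos : 0 < log (1 + √t) := log_pos (by linarith)
  have hneg : (1 - √t) * log (1 - √t) ≤ 0 := mul_log_nonpos (by linarith) (by linarith)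
  rw [oddMulLog]
  nlinarith

lemma psi_one : psi 1 = 2 * log 2 := by
  have h4 : log 4 = 2 * log 2 := by
    rw [show (4 : ℝ) = 2 ^ 2 by norm_num, log_pow, Nat.cast_ofNat]
  rw [psi, sqrt_one]
  norm_num [h4]
  ring

lemma ConcaveOn.sum_perspective_le {ι : Type*} {s : Finset ι} {φ : ℝ → ℝ}
    (hφ : ConcaveOn ℝ (Icc 0 1) φ) {d k : ι → ℝ} (hd : ∀ i ∈ s, 0 ≤ d i)
    (hdk : ∀ i ∈ s, d i ≤ k i) :
    ∑ i ∈ s, k i * φ (d i / k i) ≤ (∑ i ∈ s, k i) * φ ((∑ i ∈ s, d i) / ∑ i ∈ s, k i) := by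
  have hk (i) (hi : i ∈ s) : 0 ≤ k i := (hd i hi).trans (hdk i hi)
  set K := ∑ i ∈ s, k i
  rcases (show 0 ≤ K from Finset.sum_nonneg hk).eq_or_lt with hK | hK
  · rw [← hK, zero_mul]
    refine (Finset.sum_eq_zero fun i hi => ?_).le
    rw [(Finset.sum_eq_zero_iff_of_nonneg hk).1 hK.symm i hi, zero_mul]
  have hweight (i) (hi : i ∈ s) : k i / K * (d i / k i) = d i / K := by
    rcases (hk i hi).eq_or_lt with hki | hki
    · rw [← hki, le_antisymm (hki ▸ hdk i hi) (hd i hi)]; simp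
    · field_simp
  have h := hφ.le_map_sum (t := s) (w := fun i => k i / K) (p := fun i => d i / k i)
    (fun i hi => div_nonneg (hk i hi) hK.le) (by rw [← Finset.sum_div, div_self hK.ne'])
    (fun i hi => ⟨div_nonneg (hd i hi) (hk i hi), div_le_one_of_le₀ (hdk i hi) (hk i hi)⟩)
  simp only [smul_eq_mul] at h
  rw [Finset.sum_congr rfl hweight, ← Finset.sum_div] at h
  rw [← div_le_iff₀' hK, Finset.sum_div]
  simpa only [div_mul_eq_mul_div] using h

noncomputable def cubeEntropy (n : ℕ) (g : (Fin n → Bool) → ℝ) : ℝ :=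
  cubeE n (fun x => g x * log (g x)) - cubeE n g * log (cubeE n g)

noncomputable def cubeEdgeE (n : ℕ) (F : ℝ → ℝ → ℝ) (g : (Fin n → Bool) → ℝ) : ℝ :=
  cubeE n (fun x => ∑ i, F (g x) (g (Function.update x i (!x i))))

section Cube

variable {n : ℕ}

lemma cubeE_add (g h : (Fin n → Bool) → ℝ) :
    cubeE n (fun x => g x + h x) = cubeE n g + cubeE n h := by
  simp only [cubeE, Finset.sum_add_distrib, add_div]

lemma cubeE_sub (g h : (Fin n → Bool) → ℝ) :
    cubeE n (fun x => g x - h x) = cubeE n g - cubeE n h := by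
  simp only [cubeE, Finset.sum_sub_distrib, sub_div]

lemma cubeE_div_const (g : (Fin n → Bool) → ℝ) (c : ℝ) :
    cubeE n (fun x => g x / c) = cubeE n g / c := by
  simp only [cubeE, ← Finset.sum_div, div_right_comm]

lemma cubeE_mono {g h : (Fin n → Bool) → ℝ} (hgh : ∀ x, g x ≤ h x) : cubeE n g ≤ cubeE n h :=
  div_le_div_of_nonneg_right (Finset.sum_le_sum fun x _ => hgh x) (by positivity)

lemma cubeE_succ (g : (Fin (n + 1) → Bool) → ℝ) :
    cubeE (n + 1) g =
      (cubeE n (fun y => g (Fin.cons false y)) + cubeE n (fun y => g (Fin.cons true y))) / 2 := by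
  rw [cubeE, cubeE, cubeE, ← (Fin.consEquiv fun _ => Bool).sum_comp, Fintype.sum_prod_type,
    Fintype.sum_bool, pow_succ]
  simp only [Fin.consEquiv, Equiv.coe_fn_mk]
  field_simp
  ring

lemma cubeEdgeE_succ (F : ℝ → ℝ → ℝ) (g : (Fin (n + 1) → Bool) → ℝ) :
    cubeEdgeE (n + 1) F g =
      (cubeE n (fun y => F (g (Fin.cons false y)) (g (Fin.cons true y))) +
        cubeE n (fun y => F (g (Fin.cons true y)) (g (Fin.cons false y)))) / 2 +
      (cubeEdgeE n F (fun y => g (Fin.cons false y)) +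
        cubeEdgeE n F (fun y => g (Fin.cons true y))) / 2 := by
  simp only [cubeEdgeE, cubeE_succ, Fin.sum_univ_succ, Fin.cons_zero, Fin.cons_succ,
    Fin.update_cons_zero, ← Fin.cons_update, Bool.not_false, Bool.not_true, cubeE_add]
  ring

lemma cubeEntropy_succ (g : (Fin (n + 1) → Bool) → ℝ) :
    cubeEntropy (n + 1) g =
      cubeE n (fun y => twoPointEnt (g (Fin.cons false y)) (g (Fin.cons true y))) +
      cubeEntropy n (fun y => (g (Fin.cons false y) + g (Fin.cons true y)) / 2) := by
  simp only [cubeEntropy, twoPointEnt, cubeE_succ, cubeE_sub, cubeE_div_const, cubeE_add]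
  ring

lemma cubeEdgeE_twoPointEnt_midpoint_le {g₀ g₁ : (Fin n → Bool) → ℝ} (h₀ : ∀ x, 0 ≤ g₀ x)
    (h₁ : ∀ x, 0 ≤ g₁ x) :
    cubeEdgeE n twoPointEnt (fun x => (g₀ x + g₁ x) / 2) ≤
      (cubeEdgeE n twoPointEnt g₀ + cubeEdgeE n twoPointEnt g₁) / 2 := by
  rw [cubeEdgeE, cubeEdgeE, cubeEdgeE, ← cubeE_add, ← cubeE_div_const]
  refine cubeE_mono fun x => ?_
  rw [← Finset.sum_add_distrib, Finset.sum_div]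
  exact Finset.sum_le_sum fun i _ => twoPointEnt_midpoint_le (h₀ _) (h₀ _) (h₁ _) (h₁ _)

theorem cubeEntropy_le_cubeEdgeE (g : (Fin n → Bool) → ℝ) (hg : ∀ x, 0 ≤ g x) :
    cubeEntropy n g ≤ cubeEdgeE n twoPointEnt g := by
  induction n with
  | zero => simp [cubeEntropy, cubeEdgeE, cubeE]
  | succ n ih =>
    have hsymm : cubeE n (fun y => twoPointEnt (g (Fin.cons true y)) (g (Fin.cons false y))) =
        cubeE n (fun y => twoPointEnt (g (Fin.cons false y)) (g (Fin.cons true y))) := by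
      simp only [twoPointEnt_comm]
    rw [cubeEntropy_succ, cubeEdgeE_succ, hsymm]
    linarith [ih (fun y => (g (Fin.cons false y) + g (Fin.cons true y)) / 2)
        fun y => by linarith [hg (Fin.cons false y), hg (Fin.cons true y)],
      cubeEdgeE_twoPointEnt_midpoint_le (fun y => hg (Fin.cons false y))
        fun y => hg (Fin.cons true y)]

lemma cubeEntropy_nonneg (g : (Fin n → Bool) → ℝ) (hg : ∀ x, 0 ≤ g x) : 0 ≤ cubeEntropy n g := by
  have h := convexOn_mul_log.map_sum_le (t := Finset.univ) (w := fun _ => ((2 : ℝ) ^ n)⁻¹)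
    (p := g) (fun _ _ => by positivity) (by simp [Finset.card_univ])
    (fun x _ => mem_Ici.2 (hg x))
  rw [cubeEntropy, sub_nonneg]
  simpa only [cubeE, smul_eq_mul, inv_mul_eq_div, ← Finset.sum_div] using h

lemma cubeEdgeE_twoPointEnt_sq_le {f : (Fin n → Bool) → ℝ} (hf : ∀ x, 0 ≤ f x) :
    cubeEdgeE n twoPointEnt (fun x => f x ^ 2) ≤
      cubeK2 n f * psi (cubeD2 n f / (4 * cubeK2 n f)) := by
  set nbr : (Fin n → Bool) × Fin n → Fin n → Bool := fun q => Function.update q.1 q.2 (!q.1 q.2)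
  have h := concaveOn_psi.sum_perspective_le (s := Finset.univ)
    (d := fun q => ((f q.1 - f (nbr q)) / 2) ^ 2) (k := fun q => ((f q.1 + f (nbr q)) / 2) ^ 2)
    (fun _ _ => sq_nonneg _) (fun q _ => by nlinarith [mul_nonneg (hf q.1) (hf (nbr q))])
  have hK : ∑ q, ((f q.1 + f (nbr q)) / 2) ^ 2 = 2 ^ n * cubeK2 n f := by
    simp only [cubeK2, cubeE, Fintype.sum_prod_type, nbr, div_pow, ← Finset.sum_div]
    field_simp
    norm_num
  have hD : ∑ q, ((f q.1 - f (nbr q)) / 2) ^ 2 = 2 ^ n * (cubeD2 n f / 4) := by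
    simp only [cubeD2, cubeE, Fintype.sum_prod_type, nbr, div_pow, ← Finset.sum_div]
    field_simp
    norm_num
  rw [hK, hD, mul_div_mul_left _ _ (by positivity), div_div] at h
  calc cubeEdgeE n twoPointEnt (fun x => f x ^ 2)
      = (∑ q, ((f q.1 + f (nbr q)) / 2) ^ 2 *
          psi (((f q.1 - f (nbr q)) / 2) ^ 2 / ((f q.1 + f (nbr q)) / 2) ^ 2)) / 2 ^ n := by
        simp only [cubeEdgeE, cubeE, twoPointEnt_sq_sq, Fintype.sum_prod_type, nbr]
    _ ≤ 2 ^ n * cubeK2 n f * psi (cubeD2 n f / (4 * cubeK2 n f)) / 2 ^ n := by gcongr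
    _ = cubeK2 n f * psi (cubeD2 n f / (4 * cubeK2 n f)) := by field_simp

lemma cubeEnt_le_mul_psi {f : (Fin n → Bool) → ℝ} (hf : ∀ x, 0 ≤ f x) :
    cubeEnt n f ≤ cubeK2 n f * psi (cubeD2 n f / (4 * cubeK2 n f)) :=
  (cubeEntropy_le_cubeEdgeE _ fun x => sq_nonneg (f x)).trans (cubeEdgeE_twoPointEnt_sq_le hf)

lemma cubeEnt_nonneg (f : (Fin n → Bool) → ℝ) : 0 ≤ cubeEnt n f :=
  cubeEntropy_nonneg _ fun x => sq_nonneg (f x)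

lemma cubeK2_nonneg (f : (Fin n → Bool) → ℝ) : 0 ≤ cubeK2 n f := by
  unfold cubeK2 cubeE; positivity

lemma cubeD2_nonneg (f : (Fin n → Bool) → ℝ) : 0 ≤ cubeD2 n f := by
  unfold cubeD2 cubeE; positivity

lemma cubeD2_le_four_mul_cubeK2 {f : (Fin n → Bool) → ℝ} (hf : ∀ x, 0 ≤ f x) :
    cubeD2 n f ≤ 4 * cubeK2 n f := by
  rw [cubeK2, ← mul_assoc, show (4 : ℝ) * (1 / 4) = 1 by norm_num, one_mul]
  exact cubeE_mono fun x => Finset.sum_le_sum fun i _ => by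
    nlinarith [mul_nonneg (hf x) (hf (Function.update x i (!x i)))]

end Cube

theorem D2_ge_of_phi_general (n : ℕ)
    (f : (Fin n → Bool) → ℝ) (hfpos : ∀ x, 0 ≤ f x)
    (φ : ℝ → ℝ)
    (hφmem : ∀ y ∈ Set.Icc (0 : ℝ) (2 * Real.log 2), φ y ∈ Set.Icc (0 : ℝ) 1)
    (hφright : ∀ y ∈ Set.Icc (0 : ℝ) (2 * Real.log 2), psi (φ y) = y) :
    cubeD2 n f ≥ 4 * cubeK2 n f * φ (cubeEnt n f / cubeK2 n f) := by
  rcases (cubeK2_nonneg f).eq_or_lt with hK | hK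
  · rw [← hK, mul_zero, zero_mul]
    exact cubeD2_nonneg f
  set t := cubeD2 n f / (4 * cubeK2 n f)
  have ht : t ∈ Icc (0 : ℝ) 1 := ⟨div_nonneg (cubeD2_nonneg f) (by positivity),
    (div_le_one (by positivity)).2 (cubeD2_le_four_mul_cubeK2 hfpos)⟩
  have hEnt : cubeEnt n f / cubeK2 n f ≤ psi t := (div_le_iff₀' hK).2 (cubeEnt_le_mul_psi hfpos)
  have hy : cubeEnt n f / cubeK2 n f ∈ Icc 0 (2 * log 2) :=
    ⟨div_nonneg (cubeEnt_nonneg f) hK.le, psi_one ▸ hEnt.trans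
      (strictMonoOn_psi.monotoneOn ht ⟨zero_le_one, le_rfl⟩ ht.2)⟩
  have hφt : φ (cubeEnt n f / cubeK2 n f) ≤ t := by
    by_contra! h
    have := strictMonoOn_psi ht (hφmem _ hy) h
    linarith [hφright _ hy]
  calc 4 * cubeK2 n f * φ (cubeEnt n f / cubeK2 n f) ≤ 4 * cubeK2 n f * t := by gcongr
    _ = cubeD2 n f := mul_div_cancel₀ _ (by positivity)

/-- For a nonzero nonnegative `f` on `{0,1}^n`,
`D²(f) ≥ 4·K²(f)·φ(Ent(f²)/K²(f))`, where `φ : [0, 2 log 2] → [0,1]` is the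
inverse of `ψ`. -/
theorem D2_ge_of_phi (n : ℕ) (hn : 1 ≤ n)
    (f : (Fin n → Bool) → ℝ) (hf : f ≠ 0) (hfpos : ∀ x, 0 ≤ f x)
    (φ : ℝ → ℝ)
    (hφmem : ∀ y ∈ Set.Icc (0 : ℝ) (2 * Real.log 2), φ y ∈ Set.Icc (0 : ℝ) 1)
    (hφright : ∀ y ∈ Set.Icc (0 : ℝ) (2 * Real.log 2), psi (φ y) = y)
    (hφleft : ∀ t ∈ Set.Icc (0 : ℝ) 1, φ (psi t) = t) :
    cubeD2 n f ≥ 4 * cubeK2 n f * φ (cubeEnt n f / cubeK2 n f) :=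
  D2_ge_of_phi_general n f hfpos φ hφmem hφright
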